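/- arXiv:2203.03090 — 3 statements merged into one kernel-verified Lean document; each statement's English description precedes it below -/
import Mathlib

section
/- Let A = O_X[x_1 t^{1/a_1},...,x_k t^{1/a_k}]^{int} be a Rees center on a regular scheme with a_1 ≤ a_2 ≤ ... ≤ a_k, and extend (x_1,...,x_k) to a full regular system of parameters (x_1,...,x_n). If f t^a ∈ A_a t^a is a homogeneous element of A and |α|/a_1 < a, then the graded differential operator D^α_{x t^{1/a_1}} = t^{-|α|/a_1} D_{x^α} sends f t^a into A_{a - |α|/a_1} t^{a - |α|/a_1}; i.e., the graded derivations t^{-1/a_1} ∂/∂x_i for i = 1,...,k preserve the center A. -/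
open MvPolynomial

/-- The normalized (divided-power) partial derivative `D_{x^α} = (1/α!) ∂^{|α|}/∂x^α`,
characterized on monomials by `D_{x^α}(x^s) = (∏ᵢ C(sᵢ,αᵢ)) x^{s-α}`. -/
noncomputable def Dnorm {σ : Type*} {K : Type*} [CommSemiring K] (α : σ →₀ ℕ)
    (f : MvPolynomial σ K) : MvPolynomial σ K :=
  Finsupp.sum (AddMonoidAlgebra.coeff f) fun s c =>
    (∏ i ∈ α.support, (s i).choose (α i)) • (monomial (s - α) c : MvPolynomial σ K)

/-- The degree-`b` graded piece of the integrally closed Rees center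
`O_X[x₁ t^{1/a₁},…,x_k t^{1/a_k}]^{int}` on `X = 𝔸ⁿ`, where `x_i = X i` for `i < k`:
the ideal generated by the monomials `x^c` with `∑ cᵢ/aᵢ ≥ b`. -/
noncomputable def centerPiece (K : Type*) [CommSemiring K] (n k : ℕ) (hkn : k ≤ n)
    (a : Fin k → ℚ) (b : ℚ) : Ideal (MvPolynomial (Fin n) K) :=
  Ideal.span {y | ∃ c : Fin k → ℕ, b ≤ ∑ i, (c i : ℚ) / a i ∧
    y = ∏ i, (X (Fin.castLE hkn i) : MvPolynomial (Fin n) K) ^ c i}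

/-! A polynomial lies in the degree-`b` piece exactly when each of its monomials `x^s` has weight
`∑ sᵢ/aᵢ ≥ b`: the piece is a monomial ideal and the weight is monotone in the exponent.
`D_{x^α}` sends `x^s` to a multiple of `x^{s-α}`, and `weight s ≤ weight (s - α) + weight α`,
while `weight α ≤ |α|/a₁` because every coordinate weight `1/aᵢ` is at most `1/a₁`. -/

namespace Finsupp

variable {σ M : Type*} [AddCommMonoid M] [PartialOrder M] [IsOrderedAddMonoid M] {w : σ → M}

theorem weight_mono (hw : ∀ i, 0 ≤ w i) : Monotone (weight w : (σ →₀ ℕ) → M) := by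
  intro s t hst
  rw [← tsub_add_cancel_of_le hst, map_add]
  exact le_add_of_nonneg_left <| Finset.sum_nonneg fun i _ => nsmul_nonneg (hw i) _

theorem weight_le_weight_tsub_add (hw : ∀ i, 0 ≤ w i) (s t : σ →₀ ℕ) :
    weight w s ≤ weight w (s - t) + weight w t :=
  map_add (weight w) (s - t) t ▸ weight_mono hw le_tsub_add

theorem weight_le_degree_nsmul {c : M} (hw : ∀ i, w i ≤ c) (f : σ →₀ ℕ) :
    weight w f ≤ f.degree • c := by
  rw [weight_apply, Finsupp.sum, degree_apply, Finset.sum_smul]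
  exact Finset.sum_le_sum fun i _ => nsmul_le_nsmul_right (hw i) _

end Finsupp

open Finsupp

theorem MvPolynomial.mem_span_monomial_setOf_le_weight_iff {σ R M : Type*} [CommSemiring R]
    [AddCommMonoid M] [PartialOrder M] [IsOrderedAddMonoid M] {w : σ → M} (hw : ∀ i, 0 ≤ w i)
    (b : M) (f : MvPolynomial σ R) :
    f ∈ Ideal.span ((fun s => monomial s (1 : R)) '' {s | b ≤ weight w s}) ↔
      ∀ s ∈ f.support, b ≤ weight w s := by
  rw [mem_ideal_span_monomial_image]
  refine forall₂_congr fun s _ => ⟨?_, fun hs => ⟨s, hs, le_rfl⟩⟩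
  rintro ⟨d, hd, hds⟩
  exact hd.trans (weight_mono hw hds)

theorem exists_mem_support_of_mem_support_Dnorm {σ K : Type*} [CommSemiring K] {α : σ →₀ ℕ}
    {f : MvPolynomial σ K} {t : σ →₀ ℕ} (ht : t ∈ (Dnorm α f).support) :
    ∃ s ∈ f.support, s - α = t := by
  classical
  obtain ⟨s, hs, hts⟩ := Finset.mem_biUnion.1 (support_sum ht)
  exact ⟨s, hs, (Finset.mem_singleton.1 (support_monomial_subset (Finsupp.support_smul hts))).symm⟩

section CenterWeight

variable {n k : ℕ} (hkn : k ≤ n) (a : Fin k → ℚ)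

noncomputable def centerWeight (j : Fin n) : ℚ :=
  if h : (j : ℕ) < k then (a ⟨j, h⟩)⁻¹ else 0

@[simp]
theorem centerWeight_castLE (i : Fin k) : centerWeight a (Fin.castLE hkn i) = (a i)⁻¹ := by
  simp [centerWeight]

variable {a}

theorem centerWeight_nonneg (ha : ∀ i, 0 ≤ a i) (j : Fin n) : 0 ≤ centerWeight a j := by
  unfold centerWeight
  split_ifs
  exacts [inv_nonneg.2 (ha _), le_rfl]

theorem centerWeight_le_inv {m : ℚ} (hm : 0 < m) (ha : ∀ i, m ≤ a i) (j : Fin n) :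
    centerWeight a j ≤ m⁻¹ := by
  unfold centerWeight
  split_ifs
  exacts [inv_anti₀ hm (ha _), (inv_pos.2 hm).le]

variable (a)

theorem weight_centerWeight (s : Fin n →₀ ℕ) :
    weight (centerWeight a) s = ∑ i, (s (Fin.castLE hkn i) : ℚ) / a i := by
  rw [weight_eq_sum]
  symm
  calc ∑ i, (s (Fin.castLE hkn i) : ℚ) / a i
      = ∑ j ∈ Finset.univ.map (Fin.castLEEmb hkn), s j • centerWeight a j := by
        simp [div_eq_mul_inv]
    _ = ∑ j, s j • centerWeight a j := by
        refine Finset.sum_subset (Finset.subset_univ _) fun j _ hj => ?_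
        have : ¬ (j : ℕ) < k := fun h => hj (Finset.mem_map.2 ⟨⟨j, h⟩, Finset.mem_univ _, rfl⟩)
        simp [centerWeight, this]

end CenterWeight

section CenterPiece

variable {K : Type*} [CommSemiring K] {n k : ℕ} (hkn : k ≤ n)

theorem prod_X_castLE_pow (c : Fin k → ℕ) :
    (∏ i, (X (Fin.castLE hkn i) : MvPolynomial (Fin n) K) ^ c i) =
      monomial (∑ i, single (Fin.castLE hkn i) (c i)) 1 := by
  simp [monomial_sum_one, X_pow_eq_monomial]

theorem sum_single_castLE_apply_castLE (c : Fin k → ℕ) (j : Fin k) :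
    (∑ i, single (Fin.castLE hkn i) (c i)) (Fin.castLE hkn j) = c j := by
  simp [finsetSum_apply, single_apply, Fin.castLE_inj]

theorem sum_single_castLE_le (s : Fin n →₀ ℕ) :
    ∑ i, single (Fin.castLE hkn i) (s (Fin.castLE hkn i)) ≤ s := by
  intro j
  by_cases hj : (j : ℕ) < k
  · have : j = Fin.castLE hkn ⟨j, hj⟩ := rfl
    rw [this, sum_single_castLE_apply_castLE]
  · rw [finsetSum_apply, Finset.sum_eq_zero fun i _ => single_eq_of_ne ?_]
    · exact Nat.zero_le _
    rintro rfl
    exact hj i.isLt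

theorem centerPiece_eq_span_monomial (a : Fin k → ℚ) (b : ℚ) :
    centerPiece K n k hkn a b =
      Ideal.span ((fun s => monomial s (1 : K)) '' {s | b ≤ weight (centerWeight a) s}) := by
  refine le_antisymm (Ideal.span_le.2 ?_) (Ideal.span_le.2 ?_)
  · rintro _ ⟨c, hc, rfl⟩
    refine Ideal.subset_span ⟨_, ?_, (prod_X_castLE_pow hkn c).symm⟩
    simpa only [Set.mem_ofPred_eq, weight_centerWeight hkn, sum_single_castLE_apply_castLE] using hc
  · rintro _ ⟨s, hs, rfl⟩
    set e := ∑ i, single (Fin.castLE hkn i) (s (Fin.castLE hkn i))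
    have hes : monomial s (1 : K) = monomial (s - e) 1 * monomial e 1 := by
      rw [monomial_mul, mul_one, tsub_add_cancel_of_le (sum_single_castLE_le hkn s)]
    show monomial s 1 ∈ _
    rw [hes]
    refine Ideal.mul_mem_left _ _ (Ideal.subset_span ⟨fun i => s (Fin.castLE hkn i), ?_, ?_⟩)
    · rwa [← weight_centerWeight]
    · exact (prod_X_castLE_pow hkn _).symm

theorem mem_centerPiece_iff {a : Fin k → ℚ} (ha : ∀ i, 0 ≤ a i) (b : ℚ)
    (f : MvPolynomial (Fin n) K) :
    f ∈ centerPiece K n k hkn a b ↔ ∀ s ∈ f.support, b ≤ weight (centerWeight a) s := by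
  rw [centerPiece_eq_span_monomial, mem_span_monomial_setOf_le_weight_iff (centerWeight_nonneg ha)]

end CenterPiece

theorem graded_derivations_preserve_center_general
    {K : Type*} [Field K] (n k : ℕ) (hk : 0 < k) (hkn : k ≤ n)
    (a : Fin k → ℚ) (ha : ∀ i, 0 < a i)
    (hmono : ∀ i j : Fin k, i ≤ j → a i ≤ a j)
    (b : ℚ) (f : MvPolynomial (Fin n) K) (hf : f ∈ centerPiece K n k hkn a b)
    (α : Fin n →₀ ℕ) :
    Dnorm α f ∈
      centerPiece K n k hkn a (b - ((α.sum fun _ m => m : ℕ) : ℚ) / a ⟨0, hk⟩) := by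
  have hw := centerWeight_nonneg (a := a) (n := n) fun i => (ha i).le
  rw [mem_centerPiece_iff hkn fun i => (ha i).le] at hf ⊢
  intro t ht
  obtain ⟨s, hs, rfl⟩ := exists_mem_support_of_mem_support_Dnorm ht
  have hα : weight (centerWeight a) α ≤ α.degree • (a ⟨0, hk⟩)⁻¹ :=
    weight_le_degree_nsmul (centerWeight_le_inv (ha _) fun i => hmono _ i (Nat.zero_le _)) α
  rw [nsmul_eq_mul, ← div_eq_mul_inv] at hα
  calc b - (α.degree : ℚ) / a ⟨0, hk⟩
      ≤ weight (centerWeight a) s - weight (centerWeight a) α := by linarith [hf s hs]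
    _ ≤ weight (centerWeight a) (s - α) := by linarith [weight_le_weight_tsub_add hw s α]

/-- Let `A = O_X[x₁ t^{1/a₁},…,x_k t^{1/a_k}]^{int}` be a Rees center on a
smooth variety (model: `X = 𝔸ⁿ` over a field of characteristic zero) with
`a₁ ≤ a₂ ≤ … ≤ a_k`, the coordinates `x₁,…,x_k` being part of the full coordinate system
`x₁,…,x_n`.  If `f t^b ∈ A_b t^b` is homogeneous of degree `b` and `|α|/a₁ < b`, then the
graded differential operator `D^α_{x t^{1/a₁}} = t^{-|α|/a₁} D_{x^α}` maps `f t^b` into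
`A_{b-|α|/a₁} t^{b-|α|/a₁}`: the graded derivations `t^{-1/a₁} ∂/∂xᵢ` preserve the center. -/
theorem graded_derivations_preserve_center
    {K : Type*} [Field K] [CharZero K] (n k : ℕ) (hk : 0 < k) (hkn : k ≤ n)
    (a : Fin k → ℚ) (ha : ∀ i, 0 < a i)
    (hmono : ∀ i j : Fin k, i ≤ j → a i ≤ a j)
    (b : ℚ) (f : MvPolynomial (Fin n) K) (hf : f ∈ centerPiece K n k hkn a b)
    (α : Fin n →₀ ℕ)
    (hα : ((α.sum fun _ m => m : ℕ) : ℚ) / a ⟨0, hk⟩ < b) :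
    Dnorm α f ∈
      centerPiece K n k hkn a (b - ((α.sum fun _ m => m : ℕ) : ℚ) / a ⟨0, hk⟩) :=
  graded_derivations_preserve_center_general n k hk hkn a ha hmono b f hf α
end

section
/- Let σ: B → X be the full cobordant blow-up of an R-admissible center A^{ext} = O_X[t^{1/w}, x̄_1 t^{1/a_1},...,x̄_k t^{1/a_k}], where R is a rational Rees algebra on a smooth variety X with ord_p(R) ≤ a_1 for all p ∈ X. Then ord_{p'}(σ^c(R)) ≤ a_1 for all p' ∈ B, where σ^c(R) = ⊕ (O_B · R_a · t_B^{aw}) t^a is the controlled transform. -/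
open MvPolynomial

/-- The structural morphism `O_X → O_B` of the full cobordant blow-up
`B = Spec O_X[t_B⁻¹, x₁ t_B^{w₁},…,x_k t_B^{w_k}]`, in the coordinates
`(s, x'₁,…,x'ₙ)` on `B` (with `s = t_B⁻¹ = X 0` and `x'ᵢ = X (i+1)`):
it sends `xᵢ ↦ x'ᵢ · s^{wᵢ}`. -/
noncomputable def cobordantPullback (K : Type*) [CommSemiring K] (n k : ℕ)
    (wnat : Fin k → ℕ) :
    MvPolynomial (Fin n) K →ₐ[K] MvPolynomial (Fin (n + 1)) K :=
  aeval fun i : Fin n =>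
    if h : (i : ℕ) < k then X i.succ * X 0 ^ wnat ⟨i, h⟩ else X i.succ

/-!
On `B`, with coordinates `(s, x'₁, …, x'ₙ)`, the pullback sends `x^u` to `s^{W(u)} x'^u`, where
`W` is the weighted degree with weights `wᵢ = w / aᵢ`. Hence the controlled transform of
`D_{x^α}` is `D_{x'^α}`: if `σ^* f = s^M g` and `W(α) ≤ M`, then
`σ^*(D_{x^α} f) = s^{M - W(α)} D_{x'^α} g`. As `a₁ ≤ aᵢ` gives `wᵢ ≤ w₁`, the bound
`|α| ≤ b a₁` forces `W(α) ≤ b a₁ w₁ = b w = M`. So the pullback of each derivative generating the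
unit ideal of `O_X` is a multiple of an admissible derivative of some `g_j`, and these generate
the unit ideal of `O_B`.
-/

open Finsupp

namespace Finsupp

variable {n : ℕ} {M : Type*}

lemma cons_add_cons [AddZeroClass M] (y y' : M) (s s' : Fin n →₀ M) :
    cons y s + cons y' s' = cons (y + y') (s + s') := by
  ext i
  cases i using Fin.cases <;> simp

lemma cons_tsub_cons [AddCommMonoid M] [PartialOrder M] [CanonicallyOrderedAdd M] [Sub M]
    [OrderedSub M] (y y' : M) (s s' : Fin n →₀ M) :
    cons y s - cons y' s' = cons (y - y') (s - s') := by
  ext i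
  cases i using Fin.cases <;> simp

lemma weight_le_degree_mul {σ : Type*} {w : σ → ℕ} {c : ℕ} (hw : ∀ i, w i ≤ c)
    (α : σ →₀ ℕ) : weight w α ≤ degree α * c := by
  rw [weight_apply, degree_apply, Finset.sum_mul]
  exact Finset.sum_le_sum fun i _ => Nat.mul_le_mul_left (α i) (hw i)

end Finsupp

lemma Ideal.iSup_span_eq_top_of_map {R S F ι : Type*} [CommSemiring R] [CommSemiring S]
    [FunLike F R S] [RingHomClass F R S] (φ : F) {A : ι → Set R} {B : ι → Set S}
    (hA : ⨆ j, Ideal.span (A j) = ⊤) (hAB : ∀ j, ∀ x ∈ A j, φ x ∈ Ideal.span (B j)) :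
    ⨆ j, Ideal.span (B j) = ⊤ := by
  rw [eq_top_iff, ← Ideal.map_top φ, ← hA, (Ideal.gc_map_comap φ).l_iSup]
  refine iSup_mono fun j => ?_
  rw [Ideal.map_span, Ideal.span_le]
  rintro _ ⟨x, hx, rfl⟩
  exact hAB j x hx

namespace MvPolynomial

section Dnorm

variable {σ K : Type*} [CommSemiring K]

lemma Dnorm_add (α : σ →₀ ℕ) (f g : MvPolynomial σ K) :
    Dnorm α (f + g) = Dnorm α f + Dnorm α g :=
  Finsupp.sum_add_index' (fun _ => by simp) fun _ _ _ => by rw [map_add, smul_add]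

lemma Dnorm_monomial (α u : σ →₀ ℕ) (c : K) :
    Dnorm α (monomial u c) = (∏ i ∈ α.support, (u i).choose (α i)) • monomial (u - α) c :=
  sum_monomial_eq (by simp)

lemma Dnorm_monomial_of_fintype [Fintype σ] (α u : σ →₀ ℕ) (c : K) :
    Dnorm α (monomial u c) = (∏ i, (u i).choose (α i)) • monomial (u - α) c := by
  rw [Dnorm_monomial, Finset.prod_subset α.support.subset_univ]
  intro i _ hi
  rw [Finsupp.notMem_support_iff.mp hi, Nat.choose_zero_right]

lemma Dnorm_X_pow_mul [DecidableEq σ] {α : σ →₀ ℕ} {i : σ} (hi : α i = 0) (m : ℕ)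
    (f : MvPolynomial σ K) : Dnorm α (X i ^ m * f) = X i ^ m * Dnorm α f := by
  induction f using MvPolynomial.induction_on' with
  | add p q hp hq => rw [mul_add, Dnorm_add, Dnorm_add, mul_add, hp, hq]
  | monomial u c =>
    have hchoose : ∀ j ∈ α.support, ((single i m + u) j).choose (α j) = (u j).choose (α j) := by
      intro j hj
      have hji : j ≠ i := by rintro rfl; exact Finsupp.mem_support_iff.mp hj hi
      simp [hji.symm]
    have hsub : single i m + u - α = single i m + (u - α) := by
      ext j
      by_cases hji : j = i <;> simp [hji, hi]
    rw [← monomial_single_add, Dnorm_monomial, Dnorm_monomial, Finset.prod_congr rfl hchoose,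
      hsub, monomial_single_add, mul_smul_comm]

lemma Dnorm_cons_zero_monomial_cons {n : ℕ} (α u : Fin n →₀ ℕ) (m : ℕ) (c : K) :
    Dnorm (cons 0 α) (monomial (cons m u) c : MvPolynomial (Fin (n + 1)) K) =
      (∏ i, (u i).choose (α i)) • monomial (cons m (u - α)) c := by
  rw [Dnorm_monomial_of_fintype, Fin.prod_univ_succ, cons_tsub_cons]
  simp

end Dnorm

section CobordantPullback

variable {K : Type*} [CommSemiring K] {n k : ℕ} (wnat : Fin k → ℕ)

def cobordantWeight (i : Fin n) : ℕ :=
  if h : (i : ℕ) < k then wnat ⟨i, h⟩ else 0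

lemma cobordantPullback_X (i : Fin n) :
    cobordantPullback K n k wnat (X i) = X i.succ * X 0 ^ cobordantWeight wnat i := by
  rw [cobordantPullback, aeval_X, cobordantWeight]
  split_ifs <;> simp

lemma X_zero_pow_mul_monomial_cons (m a : ℕ) (u : Fin n →₀ ℕ) (c : K) :
    (X 0 ^ m * monomial (cons a u) c : MvPolynomial (Fin (n + 1)) K) =
      monomial (cons (m + a) u) c := by
  rw [X_pow_eq_monomial, monomial_mul, one_mul, ← cons_zero_eq_single_zero, cons_add_cons,
    zero_add]

lemma cobordantPullback_monomial (u : Fin n →₀ ℕ) (c : K) :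
    cobordantPullback K n k wnat (monomial u c) =
      monomial (cons (weight (cobordantWeight wnat) u) u) c := by
  induction u using Finsupp.induction generalizing c with
  | zero => simp [cons_zero_zero, ← C_apply]
  | single_add i e u _ _ ih =>
    rw [monomial_single_add, map_mul, ih, map_pow, cobordantPullback_X, mul_pow, ← pow_mul,
      mul_assoc, X_zero_pow_mul_monomial_cons, X_pow_eq_monomial, monomial_mul,
      one_mul, ← cons_zero_single_eq_single_succ, cons_add_cons, zero_add, map_add,
      weight_single, smul_eq_mul, mul_comm e]

lemma Dnorm_cons_zero_cobordantPullback (α : Fin n →₀ ℕ) (f : MvPolynomial (Fin n) K) :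
    Dnorm (cons 0 α) (cobordantPullback K n k wnat f) =
      X 0 ^ weight (cobordantWeight wnat) α * cobordantPullback K n k wnat (Dnorm α f) := by
  induction f using MvPolynomial.induction_on' with
  | add p q hp hq => rw [map_add, Dnorm_add, Dnorm_add, map_add, hp, hq, mul_add]
  | monomial u c =>
    rw [cobordantPullback_monomial, Dnorm_cons_zero_monomial_cons, Dnorm_monomial_of_fintype,
      map_nsmul, cobordantPullback_monomial, mul_smul_comm, X_zero_pow_mul_monomial_cons]
    by_cases hle : α ≤ u
    · rw [← map_add, add_tsub_cancel_of_le hle]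
    · obtain ⟨i, hi⟩ : ∃ i, u i < α i := by simpa [Finsupp.le_def] using hle
      rw [Finset.prod_eq_zero (Finset.mem_univ i) (Nat.choose_eq_zero_of_lt hi), zero_smul,
        zero_smul]

lemma cobordantPullback_Dnorm {f : MvPolynomial (Fin n) K} {g : MvPolynomial (Fin (n + 1)) K}
    {M : ℕ} (hg : cobordantPullback K n k wnat f = X 0 ^ M * g) {α : Fin n →₀ ℕ}
    (hα : weight (cobordantWeight wnat) α ≤ M) :
    cobordantPullback K n k wnat (Dnorm α f) =
      X 0 ^ (M - weight (cobordantWeight wnat) α) * Dnorm (cons 0 α) g := by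
  apply (isRegular_X_pow (R := K) (n := 0) (weight (cobordantWeight wnat) α)).left
  dsimp only
  rw [← Dnorm_cons_zero_cobordantPullback, hg, Dnorm_X_pow_mul (cons_zero 0 α), ← mul_assoc,
    ← pow_add, Nat.add_sub_cancel' hα]

end CobordantPullback

lemma cobordantWeight_le {k : ℕ} (hk : 0 < k) {a : Fin k → ℚ} (ha : ∀ i, 0 < a i)
    (hmono : ∀ i j : Fin k, i ≤ j → a i ≤ a j) {wq : ℚ} {wnat : Fin k → ℕ}
    (hwnat : ∀ i, (wnat i : ℚ) = wq / a i) {n : ℕ} (i : Fin n) :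
    cobordantWeight wnat i ≤ wnat ⟨0, hk⟩ := by
  unfold cobordantWeight
  split_ifs with h
  · have hwq : 0 ≤ wq := by
      rw [← (eq_div_iff (ha _).ne').mp (hwnat ⟨0, hk⟩)]
      exact mul_nonneg (Nat.cast_nonneg _) (ha _).le
    have hle : (wnat ⟨i, h⟩ : ℚ) ≤ wnat ⟨0, hk⟩ := by
      rw [hwnat, hwnat]
      exact div_le_div_of_nonneg_left hwq (ha _) (hmono _ _ (Fin.mk_le_mk.mpr (Nat.zero_le _)))
    exact_mod_cast hle
  · exact Nat.zero_le _

lemma weight_cobordantWeight_le {k : ℕ} (hk : 0 < k) {a : Fin k → ℚ} (ha : ∀ i, 0 < a i)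
    (hmono : ∀ i j : Fin k, i ≤ j → a i ≤ a j) {wq : ℚ} {wnat : Fin k → ℕ}
    (hwnat : ∀ i, (wnat i : ℚ) = wq / a i) {b : ℚ} {M : ℕ} (hM : (M : ℚ) = b * wq) {n : ℕ}
    {α : Fin n →₀ ℕ} (hα : ((degree α : ℕ) : ℚ) ≤ b * a ⟨0, hk⟩) :
    weight (cobordantWeight wnat) α ≤ M := by
  have hweight := weight_le_degree_mul (cobordantWeight_le hk ha hmono hwnat) α
  have hwq : wq = wnat ⟨0, hk⟩ * a ⟨0, hk⟩ := ((eq_div_iff (ha _).ne').mp (hwnat _)).symm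
  have hdeg : ((degree α * wnat ⟨0, hk⟩ : ℕ) : ℚ) ≤ M := by
    rw [hM, hwq, ← mul_assoc, mul_right_comm, Nat.cast_mul]
    exact mul_le_mul_of_nonneg_right hα (Nat.cast_nonneg _)
  exact hweight.trans (by exact_mod_cast hdeg)

end MvPolynomial

/-- `ord_p R ≤ a₁` for all `p` is encoded by the derivative criterion: the `D_{x^α} f_j` with
`|α| ≤ b_j a₁` generate the unit ideal. The controlled transform is generated by the `g_j`,
where `σ^* f_j = s^{b_j w} g_j`. -/
theorem order_of_controlled_transform_le_general
    {K : Type*} [Field K] (n k s : ℕ) (hk : 0 < k)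
    (a : Fin k → ℚ) (ha : ∀ i, 0 < a i)
    (hmono : ∀ i j : Fin k, i ≤ j → a i ≤ a j)
    (wq : ℚ)
    (wnat : Fin k → ℕ) (hwnat : ∀ i, (wnat i : ℚ) = wq / a i)
    (f : Fin s → MvPolynomial (Fin n) K)
    (b : Fin s → ℚ)
    (M : Fin s → ℕ) (hM : ∀ j, (M j : ℚ) = b j * wq)
    (g : Fin s → MvPolynomial (Fin (n + 1)) K)
    (hg : ∀ j, cobordantPullback K n k wnat (f j) =
      (X 0 : MvPolynomial (Fin (n + 1)) K) ^ M j * g j)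
    (hord : (⨆ j, Ideal.span {y | ∃ α : Fin n →₀ ℕ,
        ((α.sum fun _ m => m : ℕ) : ℚ) ≤ b j * a ⟨0, hk⟩ ∧ y = Dnorm α (f j)}) = ⊤) :
    (⨆ j, Ideal.span {y | ∃ α : Fin (n + 1) →₀ ℕ,
        ((α.sum fun _ m => m : ℕ) : ℚ) ≤ b j * a ⟨0, hk⟩ ∧ y = Dnorm α (g j)}) = ⊤ := by
  refine Ideal.iSup_span_eq_top_of_map (cobordantPullback K n k wnat) hord ?_
  rintro j _ ⟨α, hα, rfl⟩
  rw [cobordantPullback_Dnorm wnat (hg j) (weight_cobordantWeight_le hk ha hmono hwnat (hM j) hα)]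
  refine Ideal.mul_mem_left _ _ (Ideal.subset_span ⟨cons 0 α, ?_, rfl⟩)
  rwa [sum_cons, zero_add]

/-- Let `σ : B → X` be the full cobordant blow-up of an `R`-admissible
center `A^{ext} = O_X[t^{1/w}, x̄₁ t^{1/a₁},…,x̄_k t^{1/a_k}]` on a smooth variety (model:
`X = 𝔸ⁿ` in characteristic zero), where the rational Rees algebra `R = O_X[f_j t^{b_j}]`
satisfies `ord_p R ≤ a₁` for all `p ∈ X` — expressed, via the derivative criterion, by the
condition that the derivatives `D_{x^α} f_j` with `|α| ≤ b_j a₁` generate the unit ideal.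
Then `ord_{p'} (σ^c R) ≤ a₁` for all `p' ∈ B`, where `σ^c R` is the controlled transform,
with generators `g_j = σ^c(f_j t^{b_j})` determined by `φ(f_j) = s^{b_j w} g_j`: the
derivatives `D^α g_j` with `|α| ≤ b_j a₁` generate the unit ideal of `O_B`. -/
theorem order_of_controlled_transform_le
    {K : Type*} [Field K] [CharZero K] (n k s : ℕ) (hk : 0 < k) (hkn : k ≤ n)
    (a : Fin k → ℚ) (ha : ∀ i, 0 < a i)
    (hmono : ∀ i j : Fin k, i ≤ j → a i ≤ a j)
    (wq : ℚ) (hwq : 0 < wq)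
    (wnat : Fin k → ℕ) (hwnat : ∀ i, (wnat i : ℚ) = wq / a i)
    (f : Fin s → MvPolynomial (Fin n) K)
    (b : Fin s → ℚ) (hb : ∀ j, 0 < b j)
    (hadm : ∀ j, f j ∈ centerPiece K n k hkn a (b j))
    (M : Fin s → ℕ) (hM : ∀ j, (M j : ℚ) = b j * wq)
    (g : Fin s → MvPolynomial (Fin (n + 1)) K)
    (hg : ∀ j, cobordantPullback K n k wnat (f j) =
      (X 0 : MvPolynomial (Fin (n + 1)) K) ^ M j * g j)
    (hord : (⨆ j, Ideal.span {y | ∃ α : Fin n →₀ ℕ,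
        ((α.sum fun _ m => m : ℕ) : ℚ) ≤ b j * a ⟨0, hk⟩ ∧ y = Dnorm α (f j)}) = ⊤) :
    (⨆ j, Ideal.span {y | ∃ α : Fin (n + 1) →₀ ℕ,
        ((α.sum fun _ m => m : ℕ) : ℚ) ≤ b j * a ⟨0, hk⟩ ∧ y = Dnorm α (g j)}) = ⊤ :=
  order_of_controlled_transform_le_general n k s hk a ha hmono wq wnat hwnat f b M hM g hg hord
end

section
/- Let X be a regular scheme, J = (u_1^{1/w_1},...,u_k^{1/w_k}) a regular weighted center, and B = Spec_X(O_X[t^{-1}, u_1 t^{w_1},...,u_k t^{w_k}]) the full cobordant blow-up. Then the exceptional divisor V_B(t^{-1}) is isomorphic to the weighted normal bundle N_J(X) = Spec_X(gr_J(O_X)), where gr_J(O_X) = ⊕_{a≥0} (J^a)_X/(J^{a+1})_X. -/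
open LaurentPolynomial DirectSum

/-- `u` is part of a regular system of parameters of the (regular) local ring `R`. -/
def IsPartialRegSystemOfParams {R : Type*} [CommRing R] [IsLocalRing R] {k : ℕ}
    (u : Fin k → R) : Prop :=
  ∃ (n : ℕ) (v : Fin n → R) (e : Fin k ↪ Fin n),
    (∀ i, v (e i) = u i) ∧
    Ideal.span (Set.range v) = IsLocalRing.maximalIdeal R ∧
    ringKrullDim R = n

/-- The ideal of sections `(J^a)_X` of the `a`-th power of the weighted center
`J = (u₁^{1/w₁},…,u_k^{1/w_k})`: the ideal generated by the monomials `u^c` with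
`∑ cᵢ wᵢ ≥ a`. -/
def sectionsPow {R : Type*} [CommRing R] {k : ℕ} (u : Fin k → R) (w : Fin k → ℕ)
    (a : ℕ) : Ideal R :=
  Ideal.span {y | ∃ c : Fin k → ℕ, a ≤ ∑ i, c i * w i ∧ y = ∏ i, u i ^ c i}

/-- The coordinate ring `O_B = O_X[t⁻¹, u₁ t^{w₁},…,u_k t^{w_k}]` of the full cobordant
blow-up of the weighted center `(u₁^{1/w₁},…,u_k^{1/w_k})`. -/
noncomputable def cobordantAlgebra {R : Type*} [CommRing R] {k : ℕ}
    (u : Fin k → R) (w : Fin k → ℕ) : Subalgebra R (LaurentPolynomial R) :=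
  Algebra.adjoin R (insert (T (-1)) (Set.range fun i => C (u i) * T (w i)))

/-!
A Laurent polynomial lies in `O_B = R[t⁻¹, u₁ t^{w₁}, …, u_k t^{w_k}]` iff its `tⁿ`-coefficient
lies in `(J^n)_X` for every `n` (with `(J^n)_X = R` for `n ≤ 0`): `O_B` is the extended Rees
algebra of the filtration `a ↦ (J^a)_X`. For any such algebra, multiplication by `t⁻¹` lowers
coefficient degrees by one, so the class of `h tᵃ` modulo `t⁻¹` only depends on `h` modulo
`(J^{a+1})_X`, and monomials of negative degree are multiples of `t⁻¹`. Reading off the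
`tᵃ`-coefficients inverts this, giving `O_B/(t⁻¹) ≅ ⊕_{a ≥ 0} (J^a)_X/(J^{a+1})_X`.
-/

namespace LaurentPolynomial

variable {R : Type*} [Semiring R]

lemma coeff_C_mul_T (h : R) (n m : ℤ) :
    (C h * T n).coeff m = if n = m then h else 0 := by
  rw [← single_eq_C_mul_T]
  exact Finsupp.single_apply

lemma coeff_mul_T_neg_one (p : R[T;T⁻¹]) (n : ℤ) :
    (p * T (-1)).coeff n = p.coeff (n + 1) := by
  rw [T, AddMonoidAlgebra.coeff_mul_single_apply, neg_neg, mul_one]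

lemma sum_C_mul_T_coeff (p : R[T;T⁻¹]) :
    ∑ n ∈ p.coeff.support, C (p.coeff n) * T n = p := by
  conv_rhs => rw [← AddMonoidAlgebra.sum_coeff_single p]
  simp only [Finsupp.sum, single_eq_C_mul_T]

lemma T_sum {R : Type*} [CommSemiring R] {ι : Type*} (s : Finset ι) (e : ι → ℤ) :
    (T (∑ i ∈ s, e i) : R[T;T⁻¹]) = ∏ i ∈ s, T (e i) := by
  rw [T, ← AddMonoidAlgebra.of'_apply, AddMonoidAlgebra.of'_eq_of, ofAdd_sum, map_prod]
  rfl

end LaurentPolynomial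

section ExtendedReesAlgebra

variable {R : Type*} [CommRing R] (F : ℕ → Ideal R)

lemma SetLike.GradedMonoid.apply_zero_eq_top [SetLike.GradedMonoid F] : F 0 = ⊤ :=
  (Ideal.eq_top_iff_one _).2 SetLike.GradedOne.one_mem

lemma coeff_C_mem_of_gradedMonoid [SetLike.GradedMonoid F] (r : R) (n : ℤ) :
    (C r).coeff n ∈ F n.toNat := by
  rw [C_apply]
  split_ifs with hn
  · simp [hn, SetLike.GradedMonoid.apply_zero_eq_top F]
  · exact zero_mem _

def extendedReesAlgebra (hF : Antitone F) [SetLike.GradedMonoid F] :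
    Subalgebra R R[T;T⁻¹] where
  carrier := {p | ∀ n : ℤ, p.coeff n ∈ F n.toNat}
  mul_mem' {p q} hp hq n := show (p * q).coeff n ∈ F n.toNat by
    classical
    rw [AddMonoidAlgebra.coeff_mul]
    refine Submodule.finsuppSum_mem _ _ _ _ fun i _ ↦ Submodule.finsuppSum_mem _ _ _ _ fun j _ ↦ ?_
    split_ifs with hij
    · exact hF (by omega) (SetLike.GradedMul.mul_mem (hp i) (hq j))
    · exact zero_mem _
  one_mem' := by simpa using coeff_C_mem_of_gradedMonoid F 1
  add_mem' hp hq n := add_mem (hp n) (hq n)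
  zero_mem' _ := zero_mem _
  algebraMap_mem' r := by rw [← C_eq_algebraMap]; exact coeff_C_mem_of_gradedMonoid F r

lemma mem_extendedReesAlgebra (hF : Antitone F) [SetLike.GradedMonoid F] (p : R[T;T⁻¹]) :
    p ∈ extendedReesAlgebra F hF ↔ ∀ n : ℤ, p.coeff n ∈ F n.toNat :=
  Iff.rfl

end ExtendedReesAlgebra

namespace ExtendedRees

variable {R : Type*} [CommRing R] (F : ℕ → Ideal R)

abbrev gradedPiece (a : ℕ) : Type _ :=
  F a ⧸ Submodule.comap (F a).subtype (F (a + 1))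

variable {F} {A : Subalgebra R R[T;T⁻¹]} (hA : ∀ p, p ∈ A ↔ ∀ n : ℤ, p.coeff n ∈ F n.toNat)
  (τ : A) (hτ : (τ : R[T;T⁻¹]) = T (-1))
include hA

lemma C_mul_T_mem {n : ℤ} {h : R} (hh : h ∈ F n.toNat) : C h * T n ∈ A := by
  rw [hA]
  intro m
  rw [coeff_C_mul_T]
  split_ifs with hnm
  · exact hnm ▸ hh
  · exact zero_mem _

noncomputable def monomialToQuot (a : ℕ) : F a →ₗ[R] A ⧸ Ideal.span {τ} :=
  (Ideal.Quotient.mkₐ R (Ideal.span {τ})).toLinearMap ∘ₗ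
    LinearMap.codRestrict A.toSubmodule
      (LinearMap.mulRight R (T (a : ℤ)) ∘ₗ Algebra.linearMap R R[T;T⁻¹] ∘ₗ (F a).subtype)
      fun h ↦ by simpa [← C_eq_algebraMap] using C_mul_T_mem hA h.2

lemma monomialToQuot_apply (a : ℕ) {h : R} (hh : h ∈ F a) (z : A)
    (hz : (z : R[T;T⁻¹]) = C h * T a) :
    monomialToQuot hA τ a ⟨h, hh⟩ = Ideal.Quotient.mk (Ideal.span {τ}) z := by
  refine congrArg (Ideal.Quotient.mk _) (Subtype.ext ?_)
  rw [hz]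
  rfl

include hτ

lemma mk_eq_zero_of_eq_C_mul_T {n : ℤ} {h : R} (hh : h ∈ F (n + 1).toNat) (z : A)
    (hz : (z : R[T;T⁻¹]) = C h * T n) : Ideal.Quotient.mk (Ideal.span {τ}) z = 0 := by
  rw [Ideal.Quotient.eq_zero_iff_mem, Ideal.mem_span_singleton']
  refine ⟨⟨C h * T (n + 1), C_mul_T_mem hA hh⟩, Subtype.ext ?_⟩
  rw [Subalgebra.coe_mul, hz, hτ, mul_assoc, ← T_add, add_neg_cancel_right]

noncomputable def ofGraded : (⨁ a, gradedPiece F a) →ₗ[R] A ⧸ Ideal.span {τ} :=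
  DirectSum.toModule R ℕ _ fun a ↦ Submodule.liftQ _ (monomialToQuot hA τ a) fun h hh ↦ by
    have hz : C (h : R) * T (a : ℤ) ∈ A := C_mul_T_mem hA (by simp)
    rw [LinearMap.mem_ker, monomialToQuot_apply hA τ a h.2 ⟨_, hz⟩ rfl]
    exact mk_eq_zero_of_eq_C_mul_T hA τ hτ (by simpa using hh) _ rfl

lemma ofGraded_of (a : ℕ) {h : R} (hh : h ∈ F a) (z : A) (hz : (z : R[T;T⁻¹]) = C h * T a) :
    ofGraded hA τ hτ (DirectSum.of (gradedPiece F) a (Submodule.Quotient.mk ⟨h, hh⟩)) =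
      Ideal.Quotient.mk (Ideal.span {τ}) z := by
  rw [ofGraded, ← DirectSum.lof_eq_of R, DirectSum.toModule_lof, Submodule.liftQ_apply,
    monomialToQuot_apply hA τ a hh z hz]

noncomputable def coeffToGradedPiece (a : ℕ) : A →ₗ[R] gradedPiece F a :=
  Submodule.mkQ _ ∘ₗ
    { toFun p := ⟨(p : R[T;T⁻¹]).coeff a, by simpa using (hA p).1 p.2 a⟩
      map_add' _ _ := rfl
      map_smul' _ _ := rfl }

noncomputable def quotToGradedPiece (a : ℕ) : A ⧸ Ideal.span {τ} →ₗ[R] gradedPiece F a :=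
  Submodule.liftQ ((Ideal.span {τ}).restrictScalars R) (coeffToGradedPiece hA a) (fun p hp ↦ by
    obtain ⟨q, rfl⟩ := Ideal.mem_span_singleton'.1 hp
    rw [LinearMap.mem_ker, coeffToGradedPiece, LinearMap.comp_apply, Submodule.mkQ_apply,
      Submodule.Quotient.mk_eq_zero]
    show ((q * τ : A) : R[T;T⁻¹]).coeff a ∈ F (a + 1)
    rw [Subalgebra.coe_mul, hτ, coeff_mul_T_neg_one]
    simpa using (hA q).1 q.2 (a + 1)) ∘ₗ
  (Submodule.Quotient.restrictScalarsEquiv R (Ideal.span {τ})).symm.toLinearMap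

lemma quotToGradedPiece_mk (a : ℕ) (z : A) :
    quotToGradedPiece hA τ hτ a (Ideal.Quotient.mk _ z) =
      Submodule.Quotient.mk ⟨(z : R[T;T⁻¹]).coeff a, by simpa using (hA z).1 z.2 a⟩ :=
  rfl

lemma quotToGradedPiece_comp_ofGraded (a : ℕ) :
    quotToGradedPiece hA τ hτ a ∘ₗ ofGraded hA τ hτ = DirectSum.component R ℕ _ a := by
  refine DirectSum.linearMap_ext _ fun b ↦ Submodule.linearMap_qext _ (LinearMap.ext fun h ↦ ?_)
  have hz : C (h : R) * T (b : ℤ) ∈ A := C_mul_T_mem hA (by simp)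
  simp only [LinearMap.comp_apply, Submodule.mkQ_apply, DirectSum.lof_eq_of,
    ofGraded_of hA τ hτ b h.2 ⟨_, hz⟩ rfl, quotToGradedPiece_mk]
  rw [← DirectSum.lof_eq_of R, DirectSum.component.of]
  split_ifs with hab
  · subst hab
    exact congrArg _ (Subtype.ext (by simp [coeff_C_mul_T]))
  · rw [Submodule.Quotient.mk_eq_zero]
    simp [coeff_C_mul_T, hab]

lemma ofGraded_injective : Function.Injective (ofGraded hA τ hτ) := by
  refine (injective_iff_map_eq_zero _).2 fun x hx ↦ DirectSum.ext_component R fun a ↦ ?_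
  rw [← quotToGradedPiece_comp_ofGraded hA τ hτ a, LinearMap.comp_apply, hx, map_zero, map_zero]

lemma mk_C_mul_T_mem_range_ofGraded {n : ℤ} {h : R} (hh : h ∈ F n.toNat) :
    Ideal.Quotient.mk (Ideal.span {τ}) ⟨C h * T n, C_mul_T_mem hA hh⟩ ∈
      LinearMap.range (ofGraded hA τ hτ) := by
  rcases le_or_gt 0 n with hn | hn
  · lift n to ℕ using hn
    exact ⟨_, ofGraded_of hA τ hτ n (by simpa using hh) _ rfl⟩
  · have hh' : h ∈ F (n + 1).toNat := by
      rwa [Int.toNat_of_nonpos (by omega), ← Int.toNat_of_nonpos hn.le]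
    rw [mk_eq_zero_of_eq_C_mul_T hA τ hτ hh' _ rfl]
    exact zero_mem _

lemma ofGraded_surjective : Function.Surjective (ofGraded hA τ hτ) := by
  intro q
  obtain ⟨z, rfl⟩ := Ideal.Quotient.mk_surjective q
  have hz : z = ∑ n ∈ (z : R[T;T⁻¹]).coeff.support,
      ⟨C ((z : R[T;T⁻¹]).coeff n) * T n, C_mul_T_mem hA ((hA z).1 z.2 n)⟩ := by
    refine Subtype.ext ?_
    push_cast
    exact (sum_C_mul_T_coeff _).symm
  rw [hz, map_sum]
  exact Submodule.sum_mem _ fun n _ ↦ mk_C_mul_T_mem_range_ofGraded hA τ hτ ((hA z).1 z.2 n)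

lemma ofGraded_bijective : Function.Bijective (ofGraded hA τ hτ) :=
  ⟨ofGraded_injective hA τ hτ, ofGraded_surjective hA τ hτ⟩

noncomputable def quotEquivGraded : (A ⧸ Ideal.span {τ}) ≃ₗ[R] ⨁ a, gradedPiece F a :=
  (LinearEquiv.ofBijective (ofGraded hA τ hτ) (ofGraded_bijective hA τ hτ)).symm

lemma quotEquivGraded_mk (a : ℕ) {h : R} (hh : h ∈ F a) (z : A)
    (hz : (z : R[T;T⁻¹]) = C h * T a) :
    quotEquivGraded hA τ hτ (Ideal.Quotient.mk _ z) =
      DirectSum.of (gradedPiece F) a (Submodule.Quotient.mk ⟨h, hh⟩) := by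
  rw [quotEquivGraded, LinearEquiv.symm_apply_eq, LinearEquiv.ofBijective_apply,
    ofGraded_of hA τ hτ a hh z hz]

end ExtendedRees

section CobordantAlgebra

variable {R : Type*} [CommRing R] {k : ℕ} (u : Fin k → R) (w : Fin k → ℕ)

lemma sectionsPow_antitone : Antitone (sectionsPow u w) :=
  fun _ _ hab ↦ Ideal.span_mono fun _ ⟨c, hc, hy⟩ ↦ ⟨c, hab.trans hc, hy⟩

lemma prod_pow_mem_sectionsPow (c : Fin k → ℕ) :
    ∏ i, u i ^ c i ∈ sectionsPow u w (∑ i, c i * w i) :=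
  Ideal.subset_span ⟨c, le_rfl, rfl⟩

lemma mem_sectionsPow_self (i : Fin k) : u i ∈ sectionsPow u w (w i) := by
  simpa [Pi.single_apply, pow_ite] using prod_pow_mem_sectionsPow u w (Pi.single i 1)

lemma sectionsPow_mul_le (a b : ℕ) :
    sectionsPow u w a * sectionsPow u w b ≤ sectionsPow u w (a + b) := by
  rw [sectionsPow, sectionsPow, Ideal.span_mul_span, Ideal.span_le]
  rintro _ ⟨_, ⟨c, hc, rfl⟩, _, ⟨c', hc', rfl⟩, rfl⟩
  refine Ideal.subset_span ⟨c + c', ?_, ?_⟩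
  · simpa [add_mul, Finset.sum_add_distrib] using add_le_add hc hc'
  · simp [pow_add, Finset.prod_mul_distrib]

instance : SetLike.GradedMonoid (sectionsPow u w) where
  one_mem := by simpa using prod_pow_mem_sectionsPow u w 0
  mul_mem a b _ _ hx hy := sectionsPow_mul_le u w a b (Ideal.mul_mem_mul hx hy)

lemma cobordantAlgebra_le_extendedReesAlgebra :
    cobordantAlgebra u w ≤ extendedReesAlgebra (sectionsPow u w) (sectionsPow_antitone u w) := by
  have hA := mem_extendedReesAlgebra (sectionsPow u w) (sectionsPow_antitone u w)
  refine Algebra.adjoin_le ?_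
  rintro _ (rfl | ⟨i, rfl⟩)
  · simpa using ExtendedRees.C_mul_T_mem hA (n := -1) (h := 1)
      (by simp [SetLike.GradedMonoid.apply_zero_eq_top])
  · exact ExtendedRees.C_mul_T_mem hA (by simpa using mem_sectionsPow_self u w i)

lemma T_neg_one_mem_cobordantAlgebra : (T (-1) : R[T;T⁻¹]) ∈ cobordantAlgebra u w :=
  Algebra.subset_adjoin (Set.mem_insert _ _)

lemma generator_mem_cobordantAlgebra (i : Fin k) :
    C (u i) * T (w i) ∈ cobordantAlgebra u w :=
  Algebra.subset_adjoin (Set.mem_insert_of_mem _ ⟨i, rfl⟩)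

lemma C_mul_T_natCast_mem_cobordantAlgebra {a : ℕ} {h : R} (hh : h ∈ sectionsPow u w a) :
    C h * T a ∈ cobordantAlgebra u w := by
  let M : Submodule R R :=
    (cobordantAlgebra u w).toSubmodule.comap (LinearMap.mulRight R (T a) ∘ₗ Algebra.linearMap R _)
  suffices sectionsPow u w a ≤ M from this hh
  refine Submodule.span_le.2 ?_
  rintro _ ⟨c, hc, rfl⟩
  have hmonomial : C (∏ i, u i ^ c i) * T a =
      (∏ i, (C (u i) * T (w i)) ^ c i) * T (-1) ^ (∑ i, c i * w i - a) := by
    simp only [mul_pow, Finset.prod_mul_distrib, ← map_pow, ← map_prod, T_pow, mul_assoc,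
      ← T_sum, ← T_add]
    congr 2
    push_cast [Nat.cast_sub hc]
    ring
  show C (∏ i, u i ^ c i) * T a ∈ cobordantAlgebra u w
  rw [hmonomial]
  exact mul_mem (prod_mem fun i _ ↦ pow_mem (generator_mem_cobordantAlgebra u w i) _)
    (pow_mem (T_neg_one_mem_cobordantAlgebra u w) _)

lemma C_mul_T_mem_cobordantAlgebra {n : ℤ} {h : R} (hh : h ∈ sectionsPow u w n.toNat) :
    C h * T n ∈ cobordantAlgebra u w := by
  have hn : C h * T n = C h * T (n.toNat : ℤ) * T (-1) ^ (-n).toNat := by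
    rw [T_pow, mul_assoc, ← T_add]
    congr 2
    omega
  rw [hn]
  exact mul_mem (C_mul_T_natCast_mem_cobordantAlgebra u w hh)
    (pow_mem (T_neg_one_mem_cobordantAlgebra u w) _)

theorem cobordantAlgebra_eq_extendedReesAlgebra :
    cobordantAlgebra u w = extendedReesAlgebra (sectionsPow u w) (sectionsPow_antitone u w) := by
  refine le_antisymm (cobordantAlgebra_le_extendedReesAlgebra u w) fun p hp ↦ ?_
  rw [← sum_C_mul_T_coeff p]
  exact sum_mem fun n _ ↦ C_mul_T_mem_cobordantAlgebra u w (hp n)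

end CobordantAlgebra

theorem exceptional_divisor_iso_weighted_normal_bundle_general
    {R : Type*} [CommRing R] {k : ℕ}
    (u : Fin k → R)
    (w : Fin k → ℕ)
    (τ : cobordantAlgebra u w) (hτ : (τ : LaurentPolynomial R) = T (-1)) :
    ∃ e : (cobordantAlgebra u w ⧸ (Ideal.span {τ} : Ideal (cobordantAlgebra u w))) ≃ₗ[R]
        ⨁ a : ℕ, (sectionsPow u w a ⧸
          Submodule.comap (sectionsPow u w a).subtype (sectionsPow u w (a + 1))),
      ∀ (a : ℕ) (h : R) (hh : h ∈ sectionsPow u w a)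
        (z : cobordantAlgebra u w) (hz : (z : LaurentPolynomial R) = C h * T a),
        e (Ideal.Quotient.mk _ z) =
          DirectSum.of (fun a => (sectionsPow u w a ⧸
            Submodule.comap (sectionsPow u w a).subtype (sectionsPow u w (a + 1)))) a
            (Submodule.Quotient.mk ⟨h, hh⟩) := by
  have hA (p : R[T;T⁻¹]) :
      p ∈ cobordantAlgebra u w ↔ ∀ n : ℤ, p.coeff n ∈ sectionsPow u w n.toNat := by
    rw [cobordantAlgebra_eq_extendedReesAlgebra, mem_extendedReesAlgebra]
  exact ⟨ExtendedRees.quotEquivGraded hA τ hτ,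
    fun a _ hh z hz ↦ ExtendedRees.quotEquivGraded_mk hA τ hτ a hh z hz⟩

set_option synthInstance.maxHeartbeats 1000000 in
/-- Let `J = (u₁^{1/w₁},…,u_k^{1/w_k})` be a regular weighted center on
a regular (local model of a) scheme `X` and `B → X` the full cobordant blow-up.  Then the
exceptional divisor `V_B(t⁻¹)` is isomorphic to the weighted normal bundle
`N_J(X) = Spec (gr_J O_X)`: there is an (`R`-linear, grading-compatible) isomorphism
`O_B/(t⁻¹) ≅ gr_J(O_X) = ⊕_{a ≥ 0} (J^a)_X/(J^{a+1})_X`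
sending, for `h ∈ (J^a)_X`, the class of `h·tᵃ ∈ O_B` to the class of `h` in the `a`-th
graded piece. -/
theorem exceptional_divisor_iso_weighted_normal_bundle
    {R : Type*} [CommRing R] [IsLocalRing R] [IsNoetherianRing R] {k : ℕ}
    (u : Fin k → R) (hu : IsPartialRegSystemOfParams u)
    (w : Fin k → ℕ) (hw : ∀ i, 0 < w i)
    (τ : cobordantAlgebra u w) (hτ : (τ : LaurentPolynomial R) = T (-1)) :
    ∃ e : (cobordantAlgebra u w ⧸ (Ideal.span {τ} : Ideal (cobordantAlgebra u w))) ≃ₗ[R]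
        ⨁ a : ℕ, (sectionsPow u w a ⧸
          Submodule.comap (sectionsPow u w a).subtype (sectionsPow u w (a + 1))),
      ∀ (a : ℕ) (h : R) (hh : h ∈ sectionsPow u w a)
        (z : cobordantAlgebra u w) (hz : (z : LaurentPolynomial R) = C h * T a),
        e (Ideal.Quotient.mk _ z) =
          DirectSum.of (fun a => (sectionsPow u w a ⧸
            Submodule.comap (sectionsPow u w a).subtype (sectionsPow u w (a + 1)))) a
            (Submodule.Quotient.mk ⟨h, hh⟩) :=
  exceptional_divisor_iso_weighted_normal_bundle_general u w τ hτ
end
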